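/- arXiv:0808.0648 — 10 statements merged into one kernel-verified Lean document; each statement's English description precedes it below -/
import Mathlib

section
/- Let a11 < 0, a22 < 0, a33 < 0, a12 < 0, a13 < 0, a24 > 0, a34 > 0 be real numbers satisfying a11² > a33² > -a13·a34 and a11² > a22² > -a12·a24. Then Ã1 := -a22²·a11³ - a33²·a11³ - 2·a22·a33·a11³ - a22³·a11² - a33³·a11² - 4·a22·a33²·a11² + a12·a22·a24·a11² - 4·a22²·a33·a11² + a13·a33·a34·a11² - 2·a22·a33³·a11 - 4·a22²·a33²·a11 - a12·a24·a33²·a11 + a12·a22²·a24·a11 - 2·a22³·a33·a11 - a12·a22·a24·a33·a11 - a13·a22²·a34·a11 + a13·a33²·a34·a11 - a13·a22·a33·a34·a11 - a22²·a33³ - a12·a24·a33³ - a22³·a33² - a12·a22·a24·a33² - a13·a22³·a34 - a13·a22²·a33·a34 > 0. -/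
/-!
In the positive quantities `x = -a11`, `y = -a22`, `z = -a33`, `p = -a12 a24`, `q = -a13 a34`
the hypotheses read `p < y² < x²` and `q < z² < x²`, and the paper's decomposition of `Ã1`
(`splitA1` below) is a sum of products of one of the gaps `y² - p`, `z² - q`, `x² - z²`, `x² - y²`
with a polynomial with positive coefficients, plus a polynomial with positive coefficients.
-/

def splitA1 (x y z p q : ℝ) : ℝ :=
  (y^2 - p) * (z^3 + x*z^2 + x*y*z) + (z^2 - q) * (y^3 + x*y^2 + x*y*z)
    + (x^2 - z^2) * (y*p) + (x^2 - y^2) * (z*q)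
    + (x^3*y^2 + x^2*y^3 + x*y^2*p + 2*x^3*y*z + 4*x^2*y^2*z + x*y^3*z + x^3*z^2
      + 4*x^2*y*z^2 + 2*x*y^2*z^2 + x^2*z^3 + x*y*z^3 + x*z^2*q)

theorem splitA1_pos {x y z p q : ℝ} (hx : 0 < x) (hy : 0 < y) (hz : 0 < z)
    (hp : 0 ≤ p) (hq : 0 ≤ q) (hpy : p ≤ y^2) (hqz : q ≤ z^2)
    (hzx : z^2 ≤ x^2) (hyx : y^2 ≤ x^2) : 0 < splitA1 x y z p q := by
  have hy' : 0 ≤ (y^2 - p) * (z^3 + x*z^2 + x*y*z) :=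
    mul_nonneg (sub_nonneg.2 hpy) (by positivity)
  have hz' : 0 ≤ (z^2 - q) * (y^3 + x*y^2 + x*y*z) :=
    mul_nonneg (sub_nonneg.2 hqz) (by positivity)
  have hxz : 0 ≤ (x^2 - z^2) * (y*p) := mul_nonneg (sub_nonneg.2 hzx) (by positivity)
  have hxy : 0 ≤ (x^2 - y^2) * (z*q) := mul_nonneg (sub_nonneg.2 hyx) (by positivity)
  have hrest : 0 < x^3*y^2 + x^2*y^3 + x*y^2*p + 2*x^3*y*z + 4*x^2*y^2*z + x*y^3*z + x^3*z^2
      + 4*x^2*y*z^2 + 2*x*y^2*z^2 + x^2*z^3 + x*y*z^3 + x*z^2*q := by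
    positivity
  exact add_pos_of_nonneg_of_pos (add_nonneg (add_nonneg (add_nonneg hy' hz') hxz) hxy) hrest

theorem stmt_3 (a11 a22 a33 a12 a13 a24 a34 : ℝ)
    (h11 : a11 < 0) (h22 : a22 < 0) (h33 : a33 < 0)
    (h12 : a12 < 0) (h13 : a13 < 0) (h24 : a24 > 0) (h34 : a34 > 0)
    (h1 : a11^2 > a33^2) (h2 : a33^2 > -a13*a34)
    (h3 : a11^2 > a22^2) (h4 : a22^2 > -a12*a24) :
    -a22^2*a11^3 - a33^2*a11^3 - 2*a22*a33*a11^3 - a22^3*a11^2 - a33^3*a11^2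
      - 4*a22*a33^2*a11^2 + a12*a22*a24*a11^2 - 4*a22^2*a33*a11^2 + a13*a33*a34*a11^2
      - 2*a22*a33^3*a11 - 4*a22^2*a33^2*a11 - a12*a24*a33^2*a11 + a12*a22^2*a24*a11
      - 2*a22^3*a33*a11 - a12*a22*a24*a33*a11 - a13*a22^2*a34*a11 + a13*a33^2*a34*a11
      - a13*a22*a33*a34*a11 - a22^2*a33^3 - a12*a24*a33^3 - a22^3*a33^2
      - a12*a22*a24*a33^2 - a13*a22^3*a34 - a13*a22^2*a33*a34 > 0 := by
  have hsplit := splitA1_pos (x := -a11) (y := -a22) (z := -a33) (p := -(a12*a24))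
    (q := -(a13*a34)) (by linarith) (by linarith) (by linarith)
    (neg_nonneg.2 (mul_neg_of_neg_of_pos h12 h24).le)
    (neg_nonneg.2 (mul_neg_of_neg_of_pos h13 h34).le)
    (by rw [neg_sq]; linarith) (by rw [neg_sq]; linarith)
    (by rw [neg_sq, neg_sq]; exact h1.le) (by rw [neg_sq, neg_sq]; exact h3.le)
  convert hsplit using 1
  unfold splitA1
  ring
end

section
/- Let a11 < 0, a22 < 0, a33 < 0, a12 < 0, a13 < 0, a24 > 0, a34 > 0 be real numbers satisfying a11² > a33² > -a13·a34 and a11² > a22² > -a12·a24. Then Ã2 := a22·a11³ + a33·a11³ + 2·a22²·a11² + 2·a33²·a11² - a12·a24·a11² + 4·a22·a33·a11² - a13·a34·a11² + a22³·a11 + a33³·a11 + 4·a22·a33²·a11 - a12·a22·a24·a11 + 4·a22²·a33·a11 + a12·a24·a33·a11 + a13·a22·a34·a11 - a13·a33·a34·a11 + a22·a33³ - a12²·a24² + 2·a22²·a33² + a12·a24·a33² - a13²·a34² - a12·a22²·a24 + a22³·a33 + a12·a22·a24·a33 + a13·a22²·a34 - a13·a33²·a34 - 2·a12·a13·a24·a34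 + a13·a22·a33·a34 > 0. -/
/-!
Put `x = -a11`, `y = -a22`, `z = -a33`, `u = -a12 a24`, `v = -a13 a34`; then
`Ã2 = (x+y)(x+z)(y+z)(x+y+z) + u((x-z)(x+y) + y² - z²) + v((x-y)(x+z) + z² - y²) - (u+v)²`
with `0 < u < y²`, `0 < v < z²`, `y, z < x`. Bounding `(u+v)² ≤ (u+v)(y²+z²)` leaves only the
negative terms `-2uz² - 2vy² ≥ -4y²z²`, which the leading quartic dominates.
-/

lemma four_mul_sq_mul_sq_lt {x y z : ℝ} (hx : 0 < x) (hy : 0 < y) (hz : 0 < z) :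
    4 * y ^ 2 * z ^ 2 < (x + y) * (x + z) * (y + z) * (x + y + z) := by
  have hyz : y * z < (x + y) * (x + z) := by nlinarith [mul_pos hx hx, mul_pos hx hy, mul_pos hx hz]
  have h4yz : 4 * (y * z) < (y + z) * (x + y + z) := by nlinarith [sq_nonneg (y - z), mul_pos hx hy]
  calc 4 * y ^ 2 * z ^ 2 = (y * z) * (4 * (y * z)) := by ring
    _ < (x + y) * (x + z) * ((y + z) * (x + y + z)) :=
        mul_lt_mul'' hyz h4yz (by positivity) (by positivity)
    _ = (x + y) * (x + z) * (y + z) * (x + y + z) := by ring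

lemma quartic_add_sub_sq_pos {x y z u v : ℝ} (hyx : y ≤ x) (hzx : z ≤ x) (hy : 0 < y) (hz : 0 < z)
    (hu : 0 ≤ u) (hv : 0 ≤ v) (huy : u ≤ y ^ 2) (hvz : v ≤ z ^ 2) :
    0 < (x + y) * (x + z) * (y + z) * (x + y + z) + u * ((x - z) * (x + y) + y ^ 2 - z ^ 2)
      + v * ((x - y) * (x + z) + z ^ 2 - y ^ 2) - (u + v) ^ 2 := by
  have hP := four_mul_sq_mul_sq_lt (hy.trans_le hyx) hy hz
  have hsq : (u + v) ^ 2 ≤ (u + v) * (y ^ 2 + z ^ 2) := by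
    rw [sq]; exact mul_le_mul_of_nonneg_left (add_le_add huy hvz) (add_nonneg hu hv)
  have hux : 0 ≤ u * ((x - z) * (x + y)) :=
    mul_nonneg hu (mul_nonneg (sub_nonneg.2 hzx) (by linarith))
  have hvx : 0 ≤ v * ((x - y) * (x + z)) :=
    mul_nonneg hv (mul_nonneg (sub_nonneg.2 hyx) (by linarith))
  have huz : u * z ^ 2 ≤ y ^ 2 * z ^ 2 := mul_le_mul_of_nonneg_right huy (sq_nonneg z)
  have hvy : v * y ^ 2 ≤ z ^ 2 * y ^ 2 := mul_le_mul_of_nonneg_right hvz (sq_nonneg y)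
  linarith

theorem stmt_4 (a11 a22 a33 a12 a13 a24 a34 : ℝ)
    (h11 : a11 < 0) (h22 : a22 < 0) (h33 : a33 < 0)
    (h12 : a12 < 0) (h13 : a13 < 0) (h24 : a24 > 0) (h34 : a34 > 0)
    (h1 : a11^2 > a33^2) (h2 : a33^2 > -a13*a34)
    (h3 : a11^2 > a22^2) (h4 : a22^2 > -a12*a24) :
    a22*a11^3 + a33*a11^3 + 2*a22^2*a11^2 + 2*a33^2*a11^2 - a12*a24*a11^2
      + 4*a22*a33*a11^2 - a13*a34*a11^2 + a22^3*a11 + a33^3*a11 + 4*a22*a33^2*a11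
      - a12*a22*a24*a11 + 4*a22^2*a33*a11 + a12*a24*a33*a11 + a13*a22*a34*a11
      - a13*a33*a34*a11 + a22*a33^3 - a12^2*a24^2 + 2*a22^2*a33^2 + a12*a24*a33^2
      - a13^2*a34^2 - a12*a22^2*a24 + a22^3*a33 + a12*a22*a24*a33 + a13*a22^2*a34
      - a13*a33^2*a34 - 2*a12*a13*a24*a34 + a13*a22*a33*a34 > 0 := by
  have h22_11 : |a22| < |a11| := sq_lt_sq.1 h3
  have h33_11 : |a33| < |a11| := sq_lt_sq.1 h1
  rw [abs_of_neg h22, abs_of_neg h11] at h22_11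
  rw [abs_of_neg h33, abs_of_neg h11] at h33_11
  have key := quartic_add_sub_sq_pos (x := -a11) (y := -a22) (z := -a33)
    (u := -a12 * a24) (v := -a13 * a34) h22_11.le h33_11.le (neg_pos.2 h22) (neg_pos.2 h33)
    (mul_pos (neg_pos.2 h12) h24).le (mul_pos (neg_pos.2 h13) h34).le
    (by rw [neg_sq]; exact h4.le) (by rw [neg_sq]; exact h2.le)
  linarith
end

section
/- Let A_d be the real 4×4 matrix [[a11, a12, a13, 0], [0, a22, 0, a24], [0, 0, a33, a34], [α, 0, 0, -α]] with a11 < 0, a22 < 0, a33 < 0, a12 < 0, a13 < 0, a24 > 0, a34 > 0, α > 0, and suppose a11² > a33² > -a13·a34 and a11² > a22² > -a12·a24. Then every eigenvalue of A_d has negative real part. -/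
/-!
Suppose `Re μ ≥ 0`. Dividing the characteristic equation by `(μ - a22)(μ - a33)` gives
`(μ - a11)(μ + α) = α (a12 a24 / (μ - a22) + a13 a34 / (μ - a33))`.
Both summands on the right have negative real part, and the hypotheses `a22² > -a12 a24`,
`a33² > -a13 a34` bound their moduli by `-a22` and `-a33`, hence by `-a11`; so the right side lies
in the open left half-plane and has modulus `< -2 a11 α`. On the left side, once
`Re((μ - a11)(μ + α)) < 0` we have `(Im μ)² > -a11 α`, which forces modulus `> -2 a11 α`.
-/

theorem eval_charpoly_prey_predator_matrix {R : Type*} [CommRing R]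
    (a11 a22 a33 a12 a13 a24 a34 α z : R) :
    (!![a11, a12, a13, 0; 0, a22, 0, a24; 0, 0, a33, a34; α, 0, 0, -α]).charpoly.eval z
      = (z - a11) * (z - a22) * (z - a33) * (z + α)
        - α * (a12 * a24 * (z - a33) + a13 * a34 * (z - a22)) := by
  simp [Matrix.charpoly, Matrix.det_succ_row_zero, Fin.sum_univ_succ, Matrix.charmatrix_apply,
    Matrix.submatrix_apply, Matrix.diagonal_apply, Fin.succAbove]
  ring

namespace Complex

theorem re_ofReal_div_sub_neg {c q : ℝ} {z : ℂ} (hc : c < 0) (hq : q < 0) (hz : 0 ≤ z.re) :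
    ((c : ℂ) / (z - q)).re < 0 := by
  have hw : 0 < (z - q).re := by simp only [sub_re, ofReal_re]; linarith
  rw [div_eq_mul_inv, re_ofReal_mul, inv_re]
  exact mul_neg_of_neg_of_pos hc (div_pos hw (normSq_pos.2 (ne_zero_of_re_pos hw)))

theorem norm_ofReal_div_sub_lt {c q : ℝ} {z : ℂ} (hq : q < 0) (hc : |c| < q ^ 2)
    (hz : 0 ≤ z.re) : ‖(c : ℂ) / (z - q)‖ < -q := by
  have hqw : -q ≤ ‖z - q‖ := by
    refine le_trans ?_ (re_le_norm _)
    simp only [sub_re, ofReal_re]; linarith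
  rw [norm_div, norm_real, Real.norm_eq_abs, div_lt_iff₀ (by linarith)]
  nlinarith

theorem two_mul_lt_norm_sub_mul_sub_of_re_neg {z : ℂ} {a b : ℝ} (hz : 0 ≤ z.re) (ha : a ≤ 0)
    (hb : b ≤ 0) (h : ((z - a) * (z - b)).re < 0) : 2 * (a * b) < ‖(z - a) * (z - b)‖ := by
  simp only [mul_re, sub_re, sub_im, ofReal_re, ofReal_im, sub_zero] at h
  have hab : 0 ≤ a * b := mul_nonneg_of_nonpos_of_nonpos ha hb
  have hy : a * b < z.im ^ 2 := by nlinarith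
  have hnorm : ‖(z - a) * (z - b)‖ ^ 2
      = ((z.re - a) ^ 2 + z.im ^ 2) * ((z.re - b) ^ 2 + z.im ^ 2) := by
    rw [norm_mul, mul_pow, Complex.sq_norm, Complex.sq_norm]
    simp only [normSq_apply, sub_re, sub_im, ofReal_re, ofReal_im, sub_zero]
    ring
  have hxa : a ^ 2 ≤ (z.re - a) ^ 2 := by nlinarith
  have hxb : b ^ 2 ≤ (z.re - b) ^ 2 := by nlinarith
  have hsq : (2 * (a * b)) ^ 2 < ‖(z - a) * (z - b)‖ ^ 2 := calc
    (2 * (a * b)) ^ 2 < (a * b + z.im ^ 2) ^ 2 := by gcongr; linarith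
    _ ≤ (a ^ 2 + z.im ^ 2) * (b ^ 2 + z.im ^ 2) := by
      nlinarith [sq_nonneg (a - b), sq_nonneg z.im]
    _ ≤ ((z.re - a) ^ 2 + z.im ^ 2) * ((z.re - b) ^ 2 + z.im ^ 2) := by gcongr
    _ = _ := hnorm.symm
  exact lt_of_pow_lt_pow_left₀ 2 (norm_nonneg _) hsq

end Complex

open Matrix in
theorem stmt_5 (a11 a22 a33 a12 a13 a24 a34 α : ℝ)
    (h11 : a11 < 0) (h22 : a22 < 0) (h33 : a33 < 0)
    (h12 : a12 < 0) (h13 : a13 < 0) (h24 : a24 > 0) (h34 : a34 > 0) (hα : α > 0)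
    (h1 : a11^2 > a33^2) (h2 : a33^2 > -a13*a34)
    (h3 : a11^2 > a22^2) (h4 : a22^2 > -a12*a24)
    (Ad : Matrix (Fin 4) (Fin 4) ℝ)
    (hAd : Ad = !![a11, a12, a13, 0; 0, a22, 0, a24; 0, 0, a33, a34; α, 0, 0, -α]) :
    ∀ μ : ℂ, (Ad.map (Complex.ofReal)).charpoly.IsRoot μ → μ.re < 0 := by
  intro μ hroot
  by_contra! hμ
  have hmap : Ad.map Complex.ofReal
      = !![(a11 : ℂ), a12, a13, 0; 0, a22, 0, a24; 0, 0, a33, a34; α, 0, 0, -α] := by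
    subst hAd; ext i j; fin_cases i <;> fin_cases j <;> simp
  rw [Polynomial.IsRoot, hmap, eval_charpoly_prey_predator_matrix] at hroot
  have hne22 : μ - a22 ≠ 0 := Complex.ne_zero_of_re_pos (by simp; linarith)
  have hne33 : μ - a33 ≠ 0 := Complex.ne_zero_of_re_pos (by simp; linarith)
  have hE : (μ - a11) * (μ - (-α : ℝ))
      = α * ((a12 * a24 : ℝ) / (μ - a22) + (a13 * a34 : ℝ) / (μ - a33)) := by
    field_simp
    push_cast
    linear_combination hroot
  have hc22 : a12 * a24 < 0 := mul_neg_of_neg_of_pos h12 h24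
  have hc33 : a13 * a34 < 0 := mul_neg_of_neg_of_pos h13 h34
  have hre : ((μ - a11) * (μ - (-α : ℝ))).re < 0 := by
    rw [hE, Complex.re_ofReal_mul, Complex.add_re]
    exact mul_neg_of_pos_of_neg hα (add_neg (Complex.re_ofReal_div_sub_neg hc22 h22 hμ)
      (Complex.re_ofReal_div_sub_neg hc33 h33 hμ))
  have hnorm22 := Complex.norm_ofReal_div_sub_lt h22 (c := a12 * a24)
    (by rw [abs_of_neg hc22]; linarith) hμ
  have hnorm33 := Complex.norm_ofReal_div_sub_lt h33 (c := a13 * a34)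
    (by rw [abs_of_neg hc33]; linarith) hμ
  have h11_22 : a11 < a22 := by nlinarith
  have h11_33 : a11 < a33 := by nlinarith
  have hlt : ‖(μ - a11) * (μ - (-α : ℝ))‖ < 2 * (a11 * -α) := calc
    _ ≤ α * (‖((a12 * a24 : ℝ) : ℂ) / (μ - a22)‖ + ‖((a13 * a34 : ℝ) : ℂ) / (μ - a33)‖) := by
      rw [hE, norm_mul, Complex.norm_real, Real.norm_of_nonneg hα.le]
      gcongr
      exact norm_add_le _ _
    _ < α * (-a22 + -a33) := by gcongr
    _ ≤ 2 * (a11 * -α) := by nlinarith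
  exact (Complex.two_mul_lt_norm_sub_mul_sub_of_re_neg hμ h11.le (by linarith) hre).not_gt hlt
end

section
/- Let n ≥ 1 and let A be the real n×n matrix with entries A₁₁ = a11, A₁ⱼ = a_{1j} for j ≥ 2, Aᵢ₁ = a_{i1} and Aᵢᵢ = a_{ii} for i ≥ 2, and all other entries zero. Let A_d be the (n+1)×(n+1) matrix whose upper-left n×n block has first row (a11, a12, …, a1n), diagonal entries a22, …, ann in rows 2 through n (with zeros elsewhere in those rows), whose last column is (0, a21, a31, …, an1, -α)ᵀ, and whose last row is (α, 0, …, 0, -α). Then for every complex λ, det(A_d - λI) = -(α·det(A - λI) + λ·∏ᵢ₌₁ⁿ (aᵢᵢ - λ)). -/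
/-!
Split the last row `(α, 0, …, 0, -α - λ)` of `A_d - λI` as `α (e₀ - eₙ) - λ eₙ` and use
linearity of the determinant in that row. With last row `-λ eₙ` the determinant is `-λ` times
that of the upper-left block, which is upper triangular with diagonal `aᵢᵢ - λ`. With last row
`α (e₀ - eₙ)`, adding the last column to the first one turns the last row into `-α eₙ` and the
upper-left block into `A - λI`.
-/

namespace Matrix

variable {R : Type*} [CommRing R] {n : ℕ}

theorem det_of_row_last_eq_single (M : Matrix (Fin (n + 1)) (Fin (n + 1)) R) (c : R)
    (h : M (Fin.last n) = Pi.single (Fin.last n) c) :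
    det M = c * det (M.submatrix Fin.castSucc Fin.castSucc) := by
  rw [det_succ_row M (Fin.last n), Finset.sum_eq_single (Fin.last n)]
  · simp [h, (Even.add_self n).neg_one_pow]
  · intro j _ hj
    simp [h, hj]
  · simp

theorem det_of_row_last_eq (M : Matrix (Fin (n + 2)) (Fin (n + 2)) R) (α μ : R)
    (h : M (Fin.last _) = Pi.single 0 α + Pi.single (Fin.last _) (μ - α)) :
    det M = -α * det ((M.submatrix Fin.castSucc Fin.castSucc).updateCol 0
        fun i => M i.castSucc 0 + M i.castSucc (Fin.last _)) +
      μ * det (M.submatrix Fin.castSucc Fin.castSucc) := by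
  set u : Fin (n + 2) → R := Pi.single 0 α - Pi.single (Fin.last _) α
  set v : Fin (n + 2) → R := Pi.single (Fin.last _) μ
  have hsplit : M (Fin.last _) = u + v := by
    rw [h]
    ext j
    by_cases hj : j = Fin.last _ <;> simp [u, v, Pi.single_apply, hj]
    ring
  have hlast : (0 : Fin (n + 2)) ≠ Fin.last _ := Fin.last_pos.ne
  have hu : det (updateRow M (Fin.last _) u) =
      -α * det ((M.submatrix Fin.castSucc Fin.castSucc).updateCol 0
        fun i => M i.castSucc 0 + M i.castSucc (Fin.last _)) := by
    rw [← det_updateCol_add_self _ hlast, det_of_row_last_eq_single _ (-α)]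
    · congr 2
      ext i j
      by_cases hj : j = 0 <;> simp [hj, (Fin.castSucc_lt_last i).ne]
    · ext j
      by_cases hj : j = 0 <;> by_cases hj' : j = Fin.last _ <;> simp_all [u]
  have hv : det (updateRow M (Fin.last _) v) = μ * det (M.submatrix Fin.castSucc Fin.castSucc) := by
    rw [det_of_row_last_eq_single _ μ (updateRow_self)]
    congr 2
    ext i j
    simp [(Fin.castSucc_lt_last i).ne]
  calc det M = det (updateRow M (Fin.last _) (u + v)) := by rw [← hsplit, updateRow_eq_self]
    _ = _ := by rw [det_updateRow_add, hu, hv]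

end Matrix

open Matrix

section FadingMemory

variable {R : Type*} {n : ℕ}

def arrowMatrix [Zero R] (hn : 0 < n) (a : Fin n → Fin n → R) : Matrix (Fin n) (Fin n) R :=
  of fun i j =>
    if (i : ℕ) = 0 then a ⟨0, hn⟩ j
    else if (j : ℕ) = 0 then a i ⟨0, hn⟩
    else if i = j then a i i
    else 0

def fadingMemoryMatrix [Zero R] [Neg R] (hn : 0 < n) (a : Fin n → Fin n → R) (α : R) :
    Matrix (Fin (n + 1)) (Fin (n + 1)) R :=
  of fun i j =>
    if hi : (i : ℕ) < n then
      if hj : (j : ℕ) < n then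
        if (i : ℕ) = 0 then a ⟨0, hn⟩ ⟨j, hj⟩
        else if (i : ℕ) = (j : ℕ) then a ⟨i, hi⟩ ⟨i, hi⟩
        else 0
      else if (i : ℕ) = 0 then 0 else a ⟨i, hi⟩ ⟨0, hn⟩
    else if (j : ℕ) = 0 then α else if (j : ℕ) < n then 0 else -α

theorem arrowMatrix_map {S : Type*} [Zero R] [Zero S] (hn : 0 < n) (a : Fin n → Fin n → R)
    (f : R → S) (hf : f 0 = 0) :
    (arrowMatrix hn a).map f = arrowMatrix hn fun i j => f (a i j) := by
  ext i j
  simp only [arrowMatrix, map_apply, of_apply]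
  split_ifs <;> simp [hf]

theorem fadingMemoryMatrix_map {S : Type*} [Zero R] [Neg R] [Zero S] [Neg S] (hn : 0 < n)
    (a : Fin n → Fin n → R) (α : R) (f : R → S) (hf : f 0 = 0) (hf' : f (-α) = -f α) :
    (fadingMemoryMatrix hn a α).map f = fadingMemoryMatrix hn (fun i j => f (a i j)) (f α) := by
  ext i j
  simp only [fadingMemoryMatrix, map_apply, of_apply]
  split_ifs <;> simp [hf, hf']

theorem fadingMemoryMatrix_castSucc_castSucc [Zero R] [Neg R] (hn : 0 < n)
    (a : Fin n → Fin n → R) (α : R) (i j : Fin n) :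
    fadingMemoryMatrix hn a α i.castSucc j.castSucc =
      if (i : ℕ) = 0 then a ⟨0, hn⟩ j else if i = j then a i i else 0 := by
  simp only [fadingMemoryMatrix, of_apply, Fin.val_castSucc, Fin.is_lt, dif_pos, Fin.eta,
    Fin.ext_iff]

@[simp]
theorem fadingMemoryMatrix_castSucc_last [Zero R] [Neg R] (hn : 0 < n)
    (a : Fin n → Fin n → R) (α : R) (i : Fin n) :
    fadingMemoryMatrix hn a α i.castSucc (Fin.last n) =
      if (i : ℕ) = 0 then 0 else a i ⟨0, hn⟩ := by
  simp only [fadingMemoryMatrix, of_apply, Fin.val_castSucc, Fin.is_lt, dif_pos, Fin.eta,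
    Fin.val_last, lt_irrefl, dif_neg, not_false_eq_true]

@[simp]
theorem fadingMemoryMatrix_castSucc_self [Zero R] [Neg R] (hn : 0 < n)
    (a : Fin n → Fin n → R) (α : R) (i : Fin n) :
    fadingMemoryMatrix hn a α i.castSucc i.castSucc = a i i := by
  rw [fadingMemoryMatrix_castSucc_castSucc, if_pos rfl]
  split_ifs with h
  · rw [show (⟨0, hn⟩ : Fin n) = i from Fin.ext h.symm]
  · rfl

theorem fadingMemoryMatrix_last [Zero R] [Neg R] (hn : 0 < n)
    (a : Fin n → Fin n → R) (α : R) (j : Fin (n + 1)) :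
    fadingMemoryMatrix hn a α (Fin.last n) j =
      if (j : ℕ) = 0 then α else if (j : ℕ) < n then 0 else -α := by
  simp [fadingMemoryMatrix]

theorem det_fadingMemoryMatrix_sub_smul_one [CommRing R] (hn : 0 < n)
    (a : Fin n → Fin n → R) (α lam : R) :
    det (fadingMemoryMatrix hn a α - lam • 1) =
      -(α * det (arrowMatrix hn a - lam • 1) + lam * ∏ i, (a i i - lam)) := by
  obtain ⟨m, rfl⟩ : ∃ m, n = m + 1 := ⟨n - 1, by omega⟩
  set F := fadingMemoryMatrix hn a α - lam • 1
  have hrow : F (Fin.last _) = Pi.single 0 α + Pi.single (Fin.last _) (-lam - α) := by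
    ext j
    simp only [F, Pi.add_apply, Matrix.sub_apply, fadingMemoryMatrix_last]
    by_cases h0 : j = 0
    · simp [h0]
    by_cases hl : j = Fin.last _
    · simp [hl]
      ring
    · have : (j : ℕ) < m + 1 := Fin.val_lt_last hl
      simp [h0, hl, Fin.val_eq_zero_iff, this, one_apply_ne' hl]
  have hcol : (F.submatrix Fin.castSucc Fin.castSucc).updateCol 0
      (fun i => F i.castSucc 0 + F i.castSucc (Fin.last _)) = arrowMatrix hn a - lam • 1 := by
    ext i j
    rw [updateCol_apply]
    split_ifs with hj
    · subst hj
      rw [← Fin.castSucc_zero' (n := m + 1)]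
      simp only [F, Matrix.sub_apply, Matrix.smul_apply, fadingMemoryMatrix_castSucc_castSucc,
        fadingMemoryMatrix_castSucc_last, arrowMatrix, of_apply, one_apply, Fin.castSucc_inj,
        (Fin.castSucc_lt_last i).ne]
      split_ifs <;> simp_all
    · simp only [F, submatrix_apply, Matrix.sub_apply, Matrix.smul_apply,
        fadingMemoryMatrix_castSucc_castSucc, arrowMatrix, of_apply, one_apply, Fin.castSucc_inj]
      split_ifs <;> simp_all
  have htri : (F.submatrix Fin.castSucc Fin.castSucc).IsUpperTriangular := by
    intro i j hji
    have hij : i ≠ j := (show j < i from hji).ne'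
    have hi : (i : ℕ) ≠ 0 := Fin.val_ne_zero_iff.mpr (Fin.ne_zero_of_lt hji)
    simp [F, fadingMemoryMatrix_castSucc_castSucc, hi, hij, one_apply]
  rw [det_of_row_last_eq F α (-lam) hrow, hcol, det_of_isUpperTriangular htri]
  have hdiag : ∀ i, F i.castSucc i.castSucc = a i i - lam := by simp [F]
  simp only [submatrix_apply, hdiag]
  ring

end FadingMemory

open Matrix in
theorem stmt_8 (n : ℕ) (hn : 0 < n) (a : Fin n → Fin n → ℝ) (α : ℝ)
    (A : Matrix (Fin n) (Fin n) ℝ)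
    (hA : A = Matrix.of fun (i j : Fin n) =>
      if (i : ℕ) = 0 then a ⟨0, hn⟩ j
      else if (j : ℕ) = 0 then a i ⟨0, hn⟩
      else if i = j then a i i
      else 0)
    (Ad : Matrix (Fin (n+1)) (Fin (n+1)) ℝ)
    (hAd : Ad = Matrix.of fun (i j : Fin (n+1)) =>
      if hi : (i : ℕ) < n then
        if hj : (j : ℕ) < n then
          if (i : ℕ) = 0 then a ⟨0, hn⟩ ⟨j, hj⟩
          else if (i : ℕ) = (j : ℕ) then a ⟨i, hi⟩ ⟨i, hi⟩
          else 0
        else -- last column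
          if (i : ℕ) = 0 then 0 else a ⟨i, hi⟩ ⟨0, hn⟩
      else -- last row
        if (j : ℕ) = 0 then α else if (j : ℕ) < n then 0 else -α) :
    ∀ lam : ℂ,
      det (Ad.map (Complex.ofReal) - lam • (1 : Matrix (Fin (n+1)) (Fin (n+1)) ℂ)) =
      -((α : ℂ) * det (A.map (Complex.ofReal) - lam • (1 : Matrix (Fin n) (Fin n) ℂ)) +
        lam * ∏ i : Fin n, ((a i i : ℂ) - lam)) := by
  intro lam
  have hA' : A.map Complex.ofReal = arrowMatrix hn fun i j => (a i j : ℂ) := by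
    rw [hA]
    exact arrowMatrix_map hn a _ Complex.ofReal_zero
  have hAd' : Ad.map Complex.ofReal = fadingMemoryMatrix hn (fun i j => (a i j : ℂ)) α := by
    rw [hAd]
    exact fadingMemoryMatrix_map hn a α _ Complex.ofReal_zero (Complex.ofReal_neg α)
  rw [hA', hAd', det_fadingMemoryMatrix_sub_smul_one]
end

section
/- Define a(x) = (1 - 1/x - (ln x)/x) / (ln x)² for x > 1. Then lim_{x→1⁺} a(x) = 1/2 and a is strictly monotone decreasing on (1, ∞); consequently a(x) < 1/2 for all x > 1. -/
/-!
Substituting `x = exp t`, the function is `φ (log x)` with `φ t = ∫₀¹ u e^{-tu} du`.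
The integrand is strictly decreasing in `t`, so `φ` is strictly antitone, and `φ` is continuous
with `φ 0 = ∫₀¹ u du = 1/2`; all three claims follow since `log` increases from `log 1 = 0`.
-/

open Real Set intervalIntegral

lemma integral_mul_exp_neg_mul {t : ℝ} (ht : t ≠ 0) :
    ∫ u in (0:ℝ)..1, u * exp (-(t * u)) = (1 - (1 + t) * exp (-t)) / t ^ 2 := by
  have hderiv : ∀ u ∈ uIcc (0:ℝ) 1, HasDerivAt (fun u => -((1 + t * u) * exp (-(t * u))) / t ^ 2)
      (u * exp (-(t * u))) u := by
    intro u _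
    refine ((((hasDerivAt_id' u).const_mul t).const_add 1).fun_mul
      ((hasDerivAt_id' u).const_mul t).fun_neg.exp).fun_neg.div_const (t ^ 2) |>.congr_deriv ?_
    field_simp
    ring
  rw [integral_eq_sub_of_hasDerivAt hderiv (Continuous.intervalIntegrable (by fun_prop) _ _)]
  simp only [mul_one, mul_zero, add_zero, neg_zero, exp_zero]
  ring

lemma strictAnti_integral_mul_exp_neg_mul :
    StrictAnti fun t : ℝ => ∫ u in (0:ℝ)..1, u * exp (-(t * u)) := by
  intro s t hst
  apply integral_lt_integral_of_continuousOn_of_le_of_exists_lt one_pos (by fun_prop) (by fun_prop)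
  · intro u hu
    have hu0 : 0 ≤ u := hu.1.le
    gcongr
  · refine ⟨1, right_mem_Icc.2 zero_le_one, ?_⟩
    simpa using hst

lemma continuous_integral_mul_exp_neg_mul :
    Continuous fun t : ℝ => ∫ u in (0:ℝ)..1, u * exp (-(t * u)) :=
  continuous_parametric_intervalIntegral_of_continuous' (by fun_prop) 0 1

lemma integral_mul_exp_neg_mul_zero : ∫ u in (0:ℝ)..1, u * exp (-(0 * u)) = 1 / 2 := by
  simp [integral_id]

lemma div_log_sq_eq_integral_mul_exp_neg_mul {x : ℝ} (hx : 1 < x) :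
    (1 - 1 / x - log x / x) / log x ^ 2 = ∫ u in (0:ℝ)..1, u * exp (-(log x * u)) := by
  rw [integral_mul_exp_neg_mul (log_pos hx).ne', exp_neg, exp_log (by linarith)]
  ring

open Real in
theorem stmt_11 (a : ℝ → ℝ)
    (ha : ∀ x, a x = (1 - 1/x - Real.log x / x) / (Real.log x)^2) :
    Filter.Tendsto a (nhdsWithin 1 (Set.Ioi 1)) (nhds (1/2)) ∧
    StrictAntiOn a (Set.Ioi 1) ∧
    ∀ x > 1, a x < 1/2 := by
  set φ := fun t : ℝ => ∫ u in (0:ℝ)..1, u * exp (-(t * u))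
  have ha_eq : EqOn (φ ∘ log) a (Ioi 1) := fun x hx =>
    (ha x ▸ div_log_sq_eq_integral_mul_exp_neg_mul hx).symm
  refine ⟨?_, ?_, fun x hx => ?_⟩
  · have hφ := continuous_integral_mul_exp_neg_mul.tendsto' _ _ integral_mul_exp_neg_mul_zero
    have hlog := (continuousAt_log one_ne_zero).tendsto
    rw [log_one] at hlog
    exact ((hφ.comp hlog).mono_left nhdsWithin_le_nhds).congr'
      (eventuallyEq_nhdsWithin_of_eqOn ha_eq)
  · refine (strictAnti_integral_mul_exp_neg_mul.comp_strictMonoOn ?_).congr ha_eq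
    exact strictMonoOn_log.mono (Ioi_subset_Ioi zero_le_one)
  · rw [← ha_eq hx, ← integral_mul_exp_neg_mul_zero]
    exact strictAnti_integral_mul_exp_neg_mul (log_pos hx)
end

section
/- For x > 1, the expression (ln x)² - 2x + 2 + 2·ln x is strictly negative. -/
/-! With `t = log x > 0`, so that `x = exp t`, the claim reads `t ^ 2 + 2 t + 2 < 2 exp t`,
which is the exponential series truncated after its quadratic term, made strict by the
positive cubic term. -/

open Real Finset

lemma Real.one_add_add_sq_div_two_lt_exp {t : ℝ} (ht : 0 < t) : 1 + t + t ^ 2 / 2 < exp t := by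
  have hcubic : 1 + t + t ^ 2 / 2 + t ^ 3 / 6 ≤ exp t := by
    simpa [sum_range_succ, Nat.factorial] using sum_le_exp_of_nonneg ht.le 4
  have : 0 < t ^ 3 / 6 := by positivity
  linarith

theorem stmt_12 (x : ℝ) (hx : 1 < x) :
    (Real.log x)^2 - 2*x + 2 + 2*Real.log x < 0 := by
  have hexp := one_add_add_sq_div_two_lt_exp (log_pos hx)
  rw [exp_log (by linarith)] at hexp
  linarith
end

section
/- For m > d > 0 and a > 1/2, the inequality a > (d/m - ((m-d)/m)·ln(m/(m-d))) / (ln(m/(m-d)))² holds. -/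
/-!
Put `t = log (m / (m - d)) > 0`, so that `(m - d) / m = exp (-t)` and `d / m = 1 - exp (-t)`.
The right-hand side becomes `(1 - (1 + t) * exp (-t)) / t ^ 2`, which is below `1 / 2` because
`g t = t ^ 2 / 2 + (1 + t) * exp (-t)` has `g 0 = 1` and `g' t = t * (1 - exp (-t)) > 0` for `t > 0`.
-/

open Real Set

lemma hasDerivAt_sq_half_add_one_add_mul_exp_neg (t : ℝ) :
    HasDerivAt (fun s => s ^ 2 / 2 + (1 + s) * exp (-s)) (t * (1 - exp (-t))) t := by
  have hsq : HasDerivAt (fun s : ℝ => s ^ 2 / 2) t t := by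
    simpa using (hasDerivAt_pow 2 t).div_const 2
  have hexp : HasDerivAt (fun s : ℝ => exp (-s)) (-exp (-t)) t := by
    simpa using (hasDerivAt_neg t).exp
  have hprod := ((hasDerivAt_id' t).const_add 1).mul hexp
  exact (hsq.add hprod).congr_deriv (by ring)

lemma one_sub_sq_half_lt_one_add_mul_exp_neg {t : ℝ} (ht : 0 < t) :
    1 - t ^ 2 / 2 < (1 + t) * exp (-t) := by
  set g : ℝ → ℝ := fun s => s ^ 2 / 2 + (1 + s) * exp (-s)
  have hg : StrictMonoOn g (Ici 0) := by
    refine strictMonoOn_of_deriv_pos (convex_Ici 0) (by fun_prop) fun s hs => ?_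
    rw [interior_Ici, mem_Ioi] at hs
    rw [(hasDerivAt_sq_half_add_one_add_mul_exp_neg s).deriv]
    exact mul_pos hs (sub_pos.mpr (exp_lt_one_iff.mpr (neg_lt_zero.mpr hs)))
  have := hg self_mem_Ici ht.le ht
  norm_num [g] at this
  linarith

lemma one_sub_inv_sub_inv_mul_log_div_log_sq_lt_half {x : ℝ} (hx : 1 < x) :
    (1 - x⁻¹ - x⁻¹ * log x) / log x ^ 2 < 1 / 2 := by
  have ht : 0 < log x := log_pos hx
  have hinv : x⁻¹ = exp (-log x) := by rw [exp_neg, exp_log (by linarith)]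
  have hkey := one_sub_sq_half_lt_one_add_mul_exp_neg ht
  rw [div_lt_iff₀ (by positivity), hinv]
  nlinarith

theorem stmt_13 (m d a : ℝ) (hmd : m > d) (hd : d > 0) (ha : a > 1/2) :
    a > (d/m - ((m - d)/m) * Real.log (m/(m - d))) / (Real.log (m/(m - d)))^2 := by
  have hm : 0 < m := hd.trans hmd
  have hmd' : 0 < m - d := sub_pos.mpr hmd
  have hx : 1 < m / (m - d) := by rw [one_lt_div hmd']; linarith
  have hinv : (m / (m - d))⁻¹ = (m - d) / m := inv_div _ _
  have hdm : d / m = 1 - (m - d) / m := by field_simp; ring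
  have := one_sub_inv_sub_inv_mul_log_div_log_sq_lt_half hx
  rw [hinv, ← hdm] at this
  linarith
end

section
/- Let r > 12 and α > 0. Then every root of the cubic polynomial (8 - r - λ)(-4 - λ)(-α - λ) - 12α has negative real part; consequently the matrix A_d = [[8 - r, -4, -8, 0], [0, -4, 0, 1], [0, 0, -4, 1], [α, 0, 0, -α]] is stable. -/
/-!
If `Re z ≥ 0`, every factor `a - z` with real `a ≤ 0` has modulus at least `|a|`. So a root of the
cubic, i.e. a solution of `(8 - r - z)(-4 - z)(-α - z) = 12α`, with `Re z ≥ 0` would force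
`12α ≥ (r - 8)·4·α > 12α`. Expanding `det (μ I - A_d)` along its first column gives `(μ + 4)` times
the cubic, up to sign, so the eigenvalues of `A_d` are `-4` and the roots of the cubic.
-/

open Matrix Polynomial

lemma abs_le_norm_ofReal_sub {a : ℝ} {z : ℂ} (ha : a ≤ 0) (hz : 0 ≤ z.re) :
    |a| ≤ ‖(a : ℂ) - z‖ := by
  have h := neg_le_of_abs_le (Complex.abs_re_le_norm ((a : ℂ) - z))
  rw [Complex.sub_re, Complex.ofReal_re] at h
  rw [abs_of_nonpos ha]
  linarith

lemma re_neg_of_prod_ofReal_sub_eq {ι : Type*} {s : Finset ι} {a : ι → ℝ}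
    (ha : ∀ i ∈ s, a i ≤ 0) {z w : ℂ} (h : ∏ i ∈ s, ((a i : ℂ) - z) = w)
    (hw : ‖w‖ < ∏ i ∈ s, |a i|) : z.re < 0 := by
  by_contra! hz
  refine hw.not_ge ?_
  rw [← h, norm_prod]
  exact Finset.prod_le_prod (fun i _ => abs_nonneg _)
    fun i hi => abs_le_norm_ofReal_sub (ha i hi) hz

lemma re_neg_of_cubic_eq_zero {r α : ℝ} (hr : 11 < r) (hα : 0 < α) {z : ℂ}
    (hz : ((8 : ℂ) - r - z) * (-4 - z) * (-(α : ℂ) - z) - 12 * α = 0) : z.re < 0 := by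
  refine re_neg_of_prod_ofReal_sub_eq (s := Finset.univ) (a := ![8 - r, -4, -α]) (w := 12 * α)
    (fun i _ => by fin_cases i <;> simp <;> linarith) ?_ ?_
  · simp [Fin.prod_univ_three]
    linear_combination hz
  · simp [Fin.prod_univ_three, abs_of_neg (show 8 - r < 0 by linarith), abs_of_pos hα]
    nlinarith

lemma eval_charpoly_A_d (r α : ℝ) (μ : ℂ) :
    ((!![8 - r, -4, -8, 0; 0, -4, 0, 1; 0, 0, -4, 1; α, 0, 0, -α] :
          Matrix (Fin 4) (Fin 4) ℝ).map (Complex.ofReal)).charpoly.eval μ =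
      -(μ + 4) * (((8 : ℂ) - r - μ) * (-4 - μ) * (-(α : ℂ) - μ) - 12 * α) := by
  rw [eval_charpoly, det_succ_column_zero]
  simp [Fin.sum_univ_succ, det_fin_three, Fin.succAbove]
  ring

open Matrix in
theorem stmt_17 (r α : ℝ) (hr : r > 12) (hα : α > 0) :
    (∀ z : ℂ, ((8 : ℂ) - r - z) * (-4 - z) * (-(α : ℂ) - z) - 12*(α : ℂ) = 0 → z.re < 0) ∧
    (∀ μ : ℂ,
      ((!![8 - r, -4, -8, 0; 0, -4, 0, 1; 0, 0, -4, 1; α, 0, 0, -α] :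
          Matrix (Fin 4) (Fin 4) ℝ).map (Complex.ofReal)).charpoly.IsRoot μ → μ.re < 0) := by
  have cubic_stable (z : ℂ) := re_neg_of_cubic_eq_zero (r := r) (z := z) (by linarith) hα
  refine ⟨cubic_stable, fun μ hμ => ?_⟩
  rw [IsRoot, eval_charpoly_A_d, mul_eq_zero, neg_eq_zero] at hμ
  rcases hμ with hμ | hμ
  · rw [eq_neg_of_add_eq_zero_left hμ]
    norm_num
  · exact cubic_stable μ hμ
end

section
/- Let p(λ) = λ⁴ + a3·λ³ + a2·λ² + a1·λ + a0 be a real quartic with a0, a1, a2, a3 > 0 and a3(a1·a2 - a0·a3) - a1² > 0. Then all roots of p have negative real part. -/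
/-!
Suppose `p` has a root `z` with `0 ≤ re z`. If `z` is real, then `p z ≥ a0 > 0`. Otherwise `z` and
`conj z` are roots, so `p` factors over `ℝ` as `(λ² + Pλ + Q)(λ² + Rλ + S)` with `P = -2 re z ≤ 0`
and `Q = |z|²`. In these coordinates the Hurwitz determinant `a3 (a1 a2 - a0 a3) - a1²` equals
`P R ((Q - S)² + a3 a1)`, and `R = a3 - P > 0`, so it is `≤ 0`.
-/

lemma quartic_pos_of_nonneg {a0 a1 a2 a3 x : ℝ} (h0 : 0 < a0) (h1 : 0 ≤ a1) (h2 : 0 ≤ a2)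
    (h3 : 0 ≤ a3) (hx : 0 ≤ x) : 0 < x^4 + a3*x^3 + a2*x^2 + a1*x + a0 := by
  positivity

lemma exists_quadratic_factor_of_root_of_im_ne_zero {a0 a1 a2 a3 : ℝ} {z : ℂ}
    (hz : z^4 + (a3 : ℂ)*z^3 + (a2 : ℂ)*z^2 + (a1 : ℂ)*z + (a0 : ℂ) = 0) (him : z.im ≠ 0) :
    ∃ r s : ℝ, a3 = -2*z.re + r ∧ a2 = Complex.normSq z + s + -2*z.re*r ∧
      a1 = -2*z.re*s + Complex.normSq z*r ∧ a0 = Complex.normSq z*s := by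
  set p := -2*z.re
  set q := Complex.normSq z
  set r := a3 - p
  set s := a2 - q - p*r
  set α := a1 - p*s - q*r
  set β := a0 - q*s
  have hquad : z^2 + (p : ℂ)*z + (q : ℂ) = 0 := by
    apply Complex.ext <;> simp [p, q, Complex.normSq_apply, pow_two] <;> ring
  have hdiv : z^4 + (a3 : ℂ)*z^3 + (a2 : ℂ)*z^2 + (a1 : ℂ)*z + (a0 : ℂ)
      = (z^2 + (p : ℂ)*z + (q : ℂ)) * (z^2 + (r : ℂ)*z + (s : ℂ)) + ((α : ℂ)*z + (β : ℂ)) := by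
    simp only [α, β, r, s]
    push_cast
    ring
  have hrem : (α : ℂ)*z + (β : ℂ) = 0 := by
    rwa [hdiv, hquad, zero_mul, zero_add] at hz
  have hα : α = 0 := by
    simpa [him] using congrArg Complex.im hrem
  have hβ : β = 0 := by
    simpa [hα] using congrArg Complex.re hrem
  exact ⟨r, s, by ring, by ring, by linarith, by linarith⟩

lemma hurwitz_det_of_quadratic_factors (p q r s : ℝ) :
    (p + r)*((p*s + q*r)*(q + s + p*r) - q*s*(p + r)) - (p*s + q*r)^2
      = p*r*((q - s)^2 + (p + r)*(p*s + q*r)) := by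
  ring

theorem stmt_18 (a0 a1 a2 a3 : ℝ)
    (h0 : 0 < a0) (h1 : 0 < a1) (h2 : 0 < a2) (h3 : 0 < a3)
    (hH : a3*(a1*a2 - a0*a3) - a1^2 > 0) :
    ∀ z : ℂ, z^4 + (a3 : ℂ)*z^3 + (a2 : ℂ)*z^2 + (a1 : ℂ)*z + (a0 : ℂ) = 0 → z.re < 0 := by
  intro z hz
  by_contra! hre
  by_cases him : z.im = 0
  · have hz_real : z = (z.re : ℂ) := Complex.ext rfl (by simpa using him)
    rw [hz_real] at hz
    exact (quartic_pos_of_nonneg h0 h1.le h2.le h3.le hre).ne' (by exact_mod_cast hz)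
  · obtain ⟨r, s, rfl, rfl, rfl, rfl⟩ := exists_quadratic_factor_of_root_of_im_ne_zero hz him
    set p := -2*z.re
    set q := Complex.normSq z
    have hp : p ≤ 0 := by simp only [p]; linarith
    have hr : 0 ≤ r := by linarith
    have hfactor : 0 ≤ (q - s)^2 + (p + r)*(p*s + q*r) := by positivity
    have hdet : (p + r)*((p*s + q*r)*(q + s + p*r) - q*s*(p + r)) - (p*s + q*r)^2 ≤ 0 := by
      rw [hurwitz_det_of_quadratic_factors]
      exact mul_nonpos_of_nonpos_of_nonneg (mul_nonpos_of_nonpos_of_nonneg hp hr) hfactor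
    linarith
end

section
/- For the ratio-dependent Holling functional response p(x, y, a) = m·x/(a·y + x) with m > d > 0 and equilibrium ratio u* = y*/x* defined by p = d, the condition a > 1 implies that the stability inequality a22² > -a12·a24 holds, where a22 = y*·p'(u*)/x*, a12 = -d - y*·p'(u*)/x*, a24 = -y*·p'(u*)·y*/x*², with p'(u) = -m·a/(a·u + 1)² evaluated at u* = (m - d)/(a·d). -/
theorem stmt_19 (m d a : ℝ) (hmd : m > d) (hd : d > 0) (ha : a > 1)
    (p : ℝ → ℝ) (hp : ∀ u, p u = m / (a*u + 1))
    (ustar : ℝ) (hustar : ustar = (m - d)/(a*d))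
    (a22 a12 a24 : ℝ)
    (ha22 : a22 = ustar * deriv p ustar)
    (ha12 : a12 = -d - ustar * deriv p ustar)
    (ha24 : a24 = -ustar^2 * deriv p ustar) :
    a22^2 > -a12 * a24 := by
  have ha0 : a > 0 := by linarith
  have hm0 : m > 0 := by linarith
  have hden : a * ustar + 1 = m / d := by
    rw [hustar]; field_simp; ring
  have hdenne : a * ustar + 1 ≠ 0 := by
    rw [hden]; positivity
  have hpe : p = fun u => m / (a * u + 1) := funext hp
  have hD : HasDerivAt (fun u => m / (a * u + 1))
      ((0 * (a * ustar + 1) - m * a) / (a * ustar + 1) ^ 2) ustar := by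
    have := (hasDerivAt_const ustar m).div
      (((hasDerivAt_id ustar).const_mul a).add_const 1) hdenne
    simpa [Pi.div_def] using this
  have hderiv : deriv p ustar = -(a * d ^ 2) / m := by
    rw [hpe, hD.deriv, hden]
    field_simp
    ring
  have hu : ustar = (m - d) / (a * d) := hustar
  have e22 : a22 = -(d * (m - d)) / m := by
    rw [ha22, hderiv, hu]; field_simp
  have e12 : a12 = -(d ^ 2) / m := by
    rw [ha12, hderiv, hu]; field_simp; ring
  have e24 : a24 = (m - d) ^ 2 / (a * m) := by
    rw [ha24, hderiv, hu]; field_simp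
  rw [e22, e12, e24]
  have hmd' : 0 < m - d := by linarith
  have key : (-(d*(m-d))/m)^2 - (-(-d^2/m)*((m-d)^2/(a*m)))
      = d^2*(m-d)^2*(a-1)/(a*m^2) := by
    field_simp
  have hpos : 0 < d^2*(m-d)^2*(a-1)/(a*m^2) :=
    div_pos (mul_pos (mul_pos (pow_pos hd 2) (pow_pos hmd' 2)) (by linarith))
      (by positivity)
  linarith
end
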